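/- Let M be a manifold with metric g, D a distribution with orthogonal projector h^α_β (and h_{αβ} = g_{αμ}h^μ_β). For any vector field X tangent to D, the Lie derivative of h_{αβ} along X equals the projection of the Killing operator of X: £_X h_{αβ} = h^μ_α h^ν_β (∇_μ X_ν + ∇_ν X_μ). -/

import Mathlib

open Finset

noncomputable section

/-- Partial derivative `∂_μ f` of a real-valued function on ℝⁿ (coordinates). -/
def pd {n : ℕ} (μ : Fin n) (f : (Fin n → ℝ) → ℝ) (x : Fin n → ℝ) : ℝ :=
  fderiv ℝ f x (Pi.single μ 1)

/-- Partial derivative `∂_μ f` of a complex-valued function on ℝⁿ. -/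
def pdC {n : ℕ} (μ : Fin n) (f : (Fin n → ℝ) → ℂ) (x : Fin n → ℝ) : ℂ :=
  fderiv ℝ f x (Pi.single μ 1)

/-- Christoffel symbols `Γ^α_{μν}` of a metric `g` with inverse `ginv`. -/
def chr {n : ℕ} (g ginv : (Fin n → ℝ) → Fin n → Fin n → ℝ)
    (x : Fin n → ℝ) (α μ ν : Fin n) : ℝ :=
  (1 / 2) * ∑ ρ, ginv x α ρ *
    (pd μ (fun y => g y ρ ν) x + pd ν (fun y => g y ρ μ) x - pd ρ (fun y => g y μ ν) x)

/-- Ricci tensor `R_{σν} = R^μ{}_{σμν}` of the metric `g`. -/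
def Ric {n : ℕ} (g ginv : (Fin n → ℝ) → Fin n → Fin n → ℝ)
    (x : Fin n → ℝ) (σ ν : Fin n) : ℝ :=
  ∑ μ, (pd μ (fun y => chr g ginv y μ ν σ) x - pd ν (fun y => chr g ginv y μ μ σ) x
    + ∑ l, (chr g ginv x μ μ l * chr g ginv x l ν σ - chr g ginv x μ ν l * chr g ginv x l μ σ))

/-- The covector `ξ_ν = g_{νρ} ξ^ρ` obtained by lowering the index of a vector field. -/
def lowV {n : ℕ} (g : (Fin n → ℝ) → Fin n → Fin n → ℝ) (ξ : (Fin n → ℝ) → Fin n → ℝ)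
    (x : Fin n → ℝ) (ν : Fin n) : ℝ :=
  ∑ ρ, g x ν ρ * ξ x ρ

/-- The covariant derivative `∇_μ ξ_ν` of (the covector associated to) a vector field. -/
def nablaLow {n : ℕ} (g ginv : (Fin n → ℝ) → Fin n → Fin n → ℝ)
    (ξ : (Fin n → ℝ) → Fin n → ℝ) (x : Fin n → ℝ) (μ ν : Fin n) : ℝ :=
  pd μ (fun y => lowV g ξ y ν) x - ∑ ρ, chr g ginv x ρ μ ν * lowV g ξ x ρ

end

noncomputable section

/-- The lowered projector `h_{αβ} = g_{αμ} h^μ_β`. -/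
def lowT {n : ℕ} (g h : (Fin n → ℝ) → Fin n → Fin n → ℝ)
    (x : Fin n → ℝ) (α β : Fin n) : ℝ :=
  ∑ μ, g x α μ * h x μ β

end

open Matrix

section Helpers

variable {n : ℕ} {x : Fin n → ℝ} {μ : Fin n}

lemma pd_add' {f g : (Fin n → ℝ) → ℝ} (hf : DifferentiableAt ℝ f x)
    (hg : DifferentiableAt ℝ g x) :
    pd μ (fun y => f y + g y) x = pd μ f x + pd μ g x := by
  simp [pd, fderiv_fun_add hf hg]

lemma pd_mul' {f g : (Fin n → ℝ) → ℝ} (hf : DifferentiableAt ℝ f x)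
    (hg : DifferentiableAt ℝ g x) :
    pd μ (fun y => f y * g y) x = pd μ f x * g x + f x * pd μ g x := by
  simp [pd, fderiv_fun_mul hf hg]; ring

lemma pd_const_sub' {f : (Fin n → ℝ) → ℝ} (c : ℝ) :
    pd μ (fun y => c - f y) x = - pd μ f x := by
  rw [pd, fderiv_const_sub]; simp [pd]

lemma pd_sum' {ι : Type*} (s : Finset ι) (f : ι → (Fin n → ℝ) → ℝ)
    (hf : ∀ i ∈ s, DifferentiableAt ℝ (f i) x) :
    pd μ (fun y => ∑ i ∈ s, f i y) x = ∑ i ∈ s, pd μ (f i) x := by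
  simp [pd, fderiv_fun_sum hf]

lemma sum_swap' (f : Fin n → Fin n → ℝ) :
    ∑ k : Fin n, ∑ σ : Fin n, f k σ = ∑ σ, ∑ k, f k σ := Finset.sum_comm

lemma sum_swap3' (F : Fin n → Fin n → Fin n → ℝ) :
    ∑ ρ : Fin n, ∑ σ : Fin n, ∑ τ : Fin n, F ρ σ τ = ∑ σ, ∑ τ, ∑ ρ, F ρ σ τ := by
  rw [sum_swap' (fun ρ σ => ∑ τ, F ρ σ τ)]
  exact Finset.sum_congr rfl fun σ _ => sum_swap' _


lemma reorg1 {n : ℕ} (c q r : Fin n → ℝ) (P Q : Fin n → Fin n → ℝ) :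
    (∑ k, (∑ σ, c σ * P σ k) * q k) + (∑ k, r k * (∑ σ, c σ * Q σ k))
      = ∑ σ, c σ * (∑ k, (P σ k * q k + r k * Q σ k)) := by
  have h1 : (∑ k, (∑ σ, c σ * P σ k) * q k) = ∑ σ, ∑ k, c σ * (P σ k * q k) := by
    rw [← sum_swap' (fun k σ => c σ * (P σ k * q k))]
    exact Finset.sum_congr rfl fun k _ => by
      rw [Finset.sum_mul]; exact Finset.sum_congr rfl fun σ _ => by ring
  have h2 : (∑ k, r k * (∑ σ, c σ * Q σ k)) = ∑ σ, ∑ k, c σ * (r k * Q σ k) := by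
    rw [← sum_swap' (fun k σ => c σ * (r k * Q σ k))]
    exact Finset.sum_congr rfl fun k _ => by
      rw [Finset.mul_sum]; exact Finset.sum_congr rfl fun σ _ => by ring
  rw [h1, h2, ← Finset.sum_add_distrib]
  refine Finset.sum_congr rfl fun σ _ => ?_
  rw [Finset.mul_sum, ← Finset.sum_add_distrib]
  exact Finset.sum_congr rfl fun k _ => by ring

lemma mat_alg {n : ℕ} (G Gd hm hd A : Matrix (Fin n) (Fin n) ℝ)
    (M1 : G * hm = hmᵀ * G)
    (M2 : hm * hm = hm)
    (M3 : Gd * hm + G * hd = hdᵀ * G + hmᵀ * Gd)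
    (M4 : hd = hd * hm + hm * hd)
    (M5 : hm * hd = hm * Aᵀ * hm - hm * Aᵀ) :
    Gd * hm + G * hd + A * (G * hm) + (G * hm) * Aᵀ
      = hmᵀ * (A * G + G * Aᵀ + Gd) * hm := by
  have M2T : hmᵀ * hmᵀ = hmᵀ := by rw [← Matrix.transpose_mul, M2]
  have M4T : hdᵀ = hmᵀ * hdᵀ + hdᵀ * hmᵀ := by
    conv_lhs => rw [M4]
    rw [Matrix.transpose_add, Matrix.transpose_mul, Matrix.transpose_mul]
  have M5T : hdᵀ * hmᵀ = hmᵀ * A * hmᵀ - A * hmᵀ := by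
    have h := congrArg Matrix.transpose M5
    simpa [Matrix.transpose_sub, Matrix.transpose_mul, Matrix.mul_assoc] using h
  have E1 : hdᵀ * G = Gd * hm + G * hd - hmᵀ * Gd := eq_sub_iff_add_eq.mpr M3.symm
  have key : hdᵀ * G = hmᵀ * (Gd * hm) + (hmᵀ * G) * (Aᵀ * hm) - G * (hm * Aᵀ) - hmᵀ * Gd
      + hmᵀ * A * G * hm - A * G * hm := by
    calc hdᵀ * G = (hmᵀ * hdᵀ + hdᵀ * hmᵀ) * G := by conv_lhs => rw [M4T]
      _ = hmᵀ * (hdᵀ * G) + (hdᵀ * hmᵀ) * G := by noncomm_ring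
      _ = hmᵀ * (Gd * hm + G * hd - hmᵀ * Gd) + (hmᵀ * A * hmᵀ - A * hmᵀ) * G := by
          rw [E1, M5T]
      _ = hmᵀ * (Gd * hm) + (hmᵀ * G) * hd - (hmᵀ * hmᵀ) * Gd
            + (hmᵀ * A) * (hmᵀ * G) - A * (hmᵀ * G) := by noncomm_ring
      _ = hmᵀ * (Gd * hm) + (G * hm) * hd - hmᵀ * Gd
            + (hmᵀ * A) * (G * hm) - A * (G * hm) := by rw [M2T, ← M1]
      _ = hmᵀ * (Gd * hm) + G * (hm * hd) - hmᵀ * Gd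
            + hmᵀ * A * G * hm - A * G * hm := by noncomm_ring
      _ = hmᵀ * (Gd * hm) + G * (hm * Aᵀ * hm - hm * Aᵀ) - hmᵀ * Gd
            + hmᵀ * A * G * hm - A * G * hm := by rw [M5]
      _ = hmᵀ * (Gd * hm) + (G * hm) * (Aᵀ * hm) - G * (hm * Aᵀ) - hmᵀ * Gd
            + hmᵀ * A * G * hm - A * G * hm := by noncomm_ring
      _ = hmᵀ * (Gd * hm) + (hmᵀ * G) * (Aᵀ * hm) - G * (hm * Aᵀ) - hmᵀ * Gd
            + hmᵀ * A * G * hm - A * G * hm := by rw [M1]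
  rw [M3, key]
  noncomm_ring

end Helpers

/-- For an (involutive) distribution `D` with nondegenerate fibers on a semi-Riemannian
    manifold, with `h^α_β` the orthogonal projector onto `D^⊥` and `X` a vector field
    tangent to `D` (`h(X) = 0`), the Lie derivative of `h_{αβ}` along `X` equals the
    projection of the Killing operator of `X`:
    `£_X h_{αβ} = h^μ_α h^ν_β (∇_μ X_ν + ∇_ν X_μ)`. -/
theorem stmt9 {n : ℕ} (g ginv h : (Fin n → ℝ) → Fin n → Fin n → ℝ)
    (X : (Fin n → ℝ) → Fin n → ℝ)
    (hgsmooth : ∀ μ ν, ContDiff ℝ (⊤ : ℕ∞) fun x => g x μ ν)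
    (hginvsmooth : ∀ μ ν, ContDiff ℝ (⊤ : ℕ∞) fun x => ginv x μ ν)
    (hhsmooth : ∀ μ ν, ContDiff ℝ (⊤ : ℕ∞) fun x => h x μ ν)
    (hgsym : ∀ x μ ν, g x μ ν = g x ν μ)
    (hinv : ∀ x μ ν, ∑ ρ, g x μ ρ * ginv x ρ ν = if μ = ν then 1 else 0)
    (hproj : ∀ x α β, ∑ μ, h x α μ * h x μ β = h x α β)
    (hsymlow : ∀ x α β, lowT g h x α β = lowT g h x β α)
    (hXsmooth : ∀ μ, ContDiff ℝ (⊤ : ℕ∞) fun x => X x μ)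
    (hXtangent : ∀ x α, ∑ β, h x α β * X x β = 0)
    (hinvol : ∀ (Y Z : (Fin n → ℝ) → Fin n → ℝ),
      (∀ μ, ContDiff ℝ (⊤ : ℕ∞) fun x => Y x μ) → (∀ μ, ContDiff ℝ (⊤ : ℕ∞) fun x => Z x μ) →
      (∀ x α, ∑ β, h x α β * Y x β = 0) → (∀ x α, ∑ β, h x α β * Z x β = 0) →
      ∀ x α, ∑ β, h x α β *
        (∑ ν, (Y x ν * pd ν (fun y => Z y β) x - Z x ν * pd ν (fun y => Y y β) x)) = 0) :
    ∀ x α β,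
      (∑ μ, X x μ * pd μ (fun y => lowT g h y α β) x)
        + (∑ μ, lowT g h x μ β * pd α (fun y => X y μ) x)
        + (∑ μ, lowT g h x α μ * pd β (fun y => X y μ) x)
      = ∑ μ, ∑ ν, h x μ α * h x ν β *
          (nablaLow g ginv X x μ ν + nablaLow g ginv X x ν μ) := by
  intro x α β
  have dg : ∀ (i j : Fin n) (y : Fin n → ℝ), DifferentiableAt ℝ (fun z => g z i j) y :=
    fun i j y => ((hgsmooth i j).differentiable (by simp)).differentiableAt
  have dh : ∀ (i j : Fin n) (y : Fin n → ℝ), DifferentiableAt ℝ (fun z => h z i j) y :=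
    fun i j y => ((hhsmooth i j).differentiable (by simp)).differentiableAt
  have dX : ∀ (i : Fin n) (y : Fin n → ℝ), DifferentiableAt ℝ (fun z => X z i) y :=
    fun i y => ((hXsmooth i).differentiable (by simp)).differentiableAt
  have pdlowT : ∀ (σ a b : Fin n),
      pd σ (fun y => lowT g h y a b) x
        = ∑ k, (pd σ (fun y => g y a k) x * h x k b + g x a k * pd σ (fun y => h y k b) x) := by
    intro σ a b
    rw [show (fun y => lowT g h y a b) = (fun y => ∑ k, g y a k * h y k b) from rfl,
      pd_sum' Finset.univ (fun k y => g y a k * h y k b) (fun k _ => (dg a k x).mul (dh k b x))]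
    exact Finset.sum_congr rfl fun k _ => pd_mul' (dg a k x) (dh k b x)
  have pdlowV : ∀ (σ b : Fin n),
      pd σ (fun y => lowV g X y b) x
        = ∑ k, (pd σ (fun y => g y b k) x * X x k + g x b k * pd σ (fun y => X y k) x) := by
    intro σ b
    rw [show (fun y => lowV g X y b) = (fun y => ∑ k, g y b k * X y k) from rfl,
      pd_sum' Finset.univ (fun k y => g y b k * X y k) (fun k _ => (dg b k x).mul (dX k x))]
    exact Finset.sum_congr rfl fun k _ => pd_mul' (dg b k x) (dX k x)
  have gsymD : ∀ (σ a b : Fin n), pd σ (fun y => g y a b) x = pd σ (fun y => g y b a) x := by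
    intro σ a b
    rw [show (fun y => g y a b) = (fun y => g y b a) from funext fun y => hgsym y a b]
  have projD : ∀ (σ a b : Fin n),
      ∑ k, (pd σ (fun y => h y a k) x * h x k b + h x a k * pd σ (fun y => h y k b) x)
        = pd σ (fun y => h y a b) x := by
    intro σ a b
    rw [show (fun y => h y a b) = (fun y => ∑ k, h y a k * h y k b) from
        funext fun y => (hproj y a b).symm,
      pd_sum' Finset.univ (fun k y => h y a k * h y k b) (fun k _ => (dh a k x).mul (dh k b x))]
    exact Finset.sum_congr rfl fun k _ => (pd_mul' (dh a k x) (dh k b x)).symm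
  have symD : ∀ (σ a b : Fin n),
      ∑ k, (pd σ (fun y => g y a k) x * h x k b + g x a k * pd σ (fun y => h y k b) x)
        = ∑ k, (pd σ (fun y => g y b k) x * h x k a + g x b k * pd σ (fun y => h y k a) x) := by
    intro σ a b
    rw [← pdlowT σ a b, ← pdlowT σ b a,
      show (fun y => lowT g h y a b) = (fun y => lowT g h y b a) from
        funext fun y => hsymlow y a b]
  have invol : ∀ (a γ : Fin n),
      ∑ b, h x a b * (∑ σ, X x σ * pd σ (fun y => h y b γ) x)
        = (∑ b, ∑ σ, (h x a b * pd σ (fun y => X y b) x) * h x σ γ)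
          - ∑ b, h x a b * pd γ (fun y => X y b) x := by
    intro a γ
    have hZs : ∀ μ, ContDiff ℝ (⊤ : ℕ∞) fun z => (if μ = γ then (1:ℝ) else 0) - h z μ γ :=
      fun μ => contDiff_const.sub (hhsmooth μ γ)
    have hZt : ∀ (y : Fin n → ℝ) (c : Fin n),
        ∑ b, h y c b * ((if b = γ then (1:ℝ) else 0) - h y b γ) = 0 := by
      intro y c
      have e1 : ∀ b : Fin n, h y c b * ((if b = γ then (1:ℝ) else 0) - h y b γ)
          = (if b = γ then h y c b else 0) - h y c b * h y b γ := by
        intro b; by_cases hb : b = γ <;> simp [hb] <;> ring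
      rw [Finset.sum_congr rfl fun b _ => e1 b, Finset.sum_sub_distrib,
        Finset.sum_ite_eq' Finset.univ γ (fun b => h y c b), hproj]
      simp
    have I0 := hinvol X (fun z μ => (if μ = γ then (1:ℝ) else 0) - h z μ γ)
        hXsmooth hZs hXtangent hZt x a
    simp only [pd_const_sub'] at I0
    have e2 : ∀ b : Fin n,
        (∑ σ, (X x σ * -pd σ (fun y => h y b γ) x
          - ((if σ = γ then (1:ℝ) else 0) - h x σ γ) * pd σ (fun y => X y b) x))
        = -(∑ σ, X x σ * pd σ (fun y => h y b γ) x) - pd γ (fun y => X y b) x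
            + ∑ σ, pd σ (fun y => X y b) x * h x σ γ := by
      intro b
      have e3 : ∀ σ : Fin n, X x σ * -pd σ (fun y => h y b γ) x
          - ((if σ = γ then (1:ℝ) else 0) - h x σ γ) * pd σ (fun y => X y b) x
          = (-(X x σ * pd σ (fun y => h y b γ) x)
              - (if σ = γ then pd σ (fun y => X y b) x else 0))
              + pd σ (fun y => X y b) x * h x σ γ := by
        intro σ; by_cases hσ : σ = γ <;> simp [hσ] <;> ring
      rw [Finset.sum_congr rfl fun σ _ => e3 σ, Finset.sum_add_distrib, Finset.sum_sub_distrib,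
        Finset.sum_neg_distrib, Finset.sum_ite_eq' Finset.univ γ (fun σ => pd σ (fun y => X y b) x)]
      simp
    simp only [e2] at I0
    simp only [mul_add, mul_sub, mul_neg] at I0
    rw [Finset.sum_add_distrib, Finset.sum_sub_distrib, Finset.sum_neg_distrib] at I0
    have e4 : ∑ b, h x a b * (∑ σ, pd σ (fun y => X y b) x * h x σ γ)
        = ∑ b, ∑ σ, (h x a b * pd σ (fun y => X y b) x) * h x σ γ := by
      refine Finset.sum_congr rfl fun b _ => ?_
      rw [Finset.mul_sum]; exact Finset.sum_congr rfl fun σ _ => by ring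
    rw [e4] at I0
    linarith [I0]
  -- matrix facts
  have M1 : (Matrix.of fun i j => g x i j) * (Matrix.of fun i j => h x i j) = (Matrix.of fun i j => h x i j)ᵀ * (Matrix.of fun i j => g x i j) := by
    ext i j
    simp only [Matrix.mul_apply, Matrix.transpose_apply, Matrix.of_apply]
    calc ∑ k, g x i k * h x k j = lowT g h x j i := hsymlow x i j
      _ = ∑ k, h x k i * g x k j := Finset.sum_congr rfl fun k _ => by rw [hgsym x j k]; ring
  have M2 : (Matrix.of fun i j => h x i j) * (Matrix.of fun i j => h x i j) = (Matrix.of fun i j => h x i j) := by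
    ext i j
    simpa only [Matrix.mul_apply, Matrix.of_apply] using hproj x i j
  have M3 : (Matrix.of fun i j => ∑ σ, X x σ * pd σ (fun y => g y i j) x) * (Matrix.of fun i j => h x i j) + (Matrix.of fun i j => g x i j) * (Matrix.of fun i j => ∑ σ, X x σ * pd σ (fun y => h y i j) x) = (Matrix.of fun i j => ∑ σ, X x σ * pd σ (fun y => h y i j) x)ᵀ * (Matrix.of fun i j => g x i j) + (Matrix.of fun i j => h x i j)ᵀ * (Matrix.of fun i j => ∑ σ, X x σ * pd σ (fun y => g y i j) x) := by
    ext i j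
    simp only [Matrix.add_apply, Matrix.mul_apply, Matrix.transpose_apply, Matrix.of_apply]
    rw [reorg1 (fun σ => X x σ) (fun k => h x k j) (fun k => g x i k)
        (fun σ k => pd σ (fun y => g y i k) x) (fun σ k => pd σ (fun y => h y k j) x),
      reorg1 (fun σ => X x σ) (fun k => g x k j) (fun k => h x k i)
        (fun σ k => pd σ (fun y => h y k i) x) (fun σ k => pd σ (fun y => g y k j) x)]
    refine Finset.sum_congr rfl fun σ _ => ?_
    congr 1
    rw [symD σ i j]
    exact Finset.sum_congr rfl fun k _ => by rw [hgsym x j k, gsymD σ j k]; ring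
  have M4 : (Matrix.of fun i j => ∑ σ, X x σ * pd σ (fun y => h y i j) x) = (Matrix.of fun i j => ∑ σ, X x σ * pd σ (fun y => h y i j) x) * (Matrix.of fun i j => h x i j) + (Matrix.of fun i j => h x i j) * (Matrix.of fun i j => ∑ σ, X x σ * pd σ (fun y => h y i j) x) := by
    ext i j
    simp only [Matrix.add_apply, Matrix.mul_apply, Matrix.of_apply]
    rw [reorg1 (fun σ => X x σ) (fun k => h x k j) (fun k => h x i k)
        (fun σ k => pd σ (fun y => h y i k) x) (fun σ k => pd σ (fun y => h y k j) x)]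
    refine Finset.sum_congr rfl fun σ _ => ?_
    rw [projD σ i j]
  have M5 : (Matrix.of fun i j => h x i j) * (Matrix.of fun i j => ∑ σ, X x σ * pd σ (fun y => h y i j) x) = (Matrix.of fun i j => h x i j) * (Matrix.of fun i j => pd i (fun y => X y j) x)ᵀ * (Matrix.of fun i j => h x i j) - (Matrix.of fun i j => h x i j) * (Matrix.of fun i j => pd i (fun y => X y j) x)ᵀ := by
    ext a c
    simp only [Matrix.sub_apply, Matrix.mul_apply, Matrix.transpose_apply, Matrix.of_apply]
    rw [invol a c]
    congr 1
    rw [sum_swap' (fun b σ => (h x a b * pd σ (fun y => X y b) x) * h x σ c)]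
    exact Finset.sum_congr rfl fun σ _ => (Finset.sum_mul _ _ _).symm
  have main := mat_alg (Matrix.of fun i j => g x i j) (Matrix.of fun i j => ∑ σ, X x σ * pd σ (fun y => g y i j) x) (Matrix.of fun i j => h x i j) (Matrix.of fun i j => ∑ σ, X x σ * pd σ (fun y => h y i j) x) (Matrix.of fun i j => pd i (fun y => X y j) x) M1 M2 M3 M4 M5
  -- goal translation
  have T1 : ∑ μ, X x μ * pd μ (fun y => lowT g h y α β) x
      = ((Matrix.of fun i j => ∑ σ, X x σ * pd σ (fun y => g y i j) x) * (Matrix.of fun i j => h x i j) + (Matrix.of fun i j => g x i j) * (Matrix.of fun i j => ∑ σ, X x σ * pd σ (fun y => h y i j) x)) α β := by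
    simp only [Matrix.add_apply, Matrix.mul_apply, Matrix.of_apply]
    rw [reorg1 (fun σ => X x σ) (fun k => h x k β) (fun k => g x α k)
        (fun σ k => pd σ (fun y => g y α k) x) (fun σ k => pd σ (fun y => h y k β) x)]
    exact Finset.sum_congr rfl fun μ _ => by rw [pdlowT μ α β]
  have T2 : ∑ μ, lowT g h x μ β * pd α (fun y => X y μ) x
      = ((Matrix.of fun i j => pd i (fun y => X y j) x) * ((Matrix.of fun i j => g x i j) * (Matrix.of fun i j => h x i j))) α β := by
    simp only [Matrix.mul_apply, Matrix.of_apply]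
    exact Finset.sum_congr rfl fun μ _ => by
      rw [show lowT g h x μ β = ∑ k, g x μ k * h x k β from rfl]; ring
  have T3 : ∑ μ, lowT g h x α μ * pd β (fun y => X y μ) x
      = (((Matrix.of fun i j => g x i j) * (Matrix.of fun i j => h x i j)) * (Matrix.of fun i j => pd i (fun y => X y j) x)ᵀ) α β := by
    simp only [Matrix.mul_apply, Matrix.transpose_apply, Matrix.of_apply]
    exact Finset.sum_congr rfl fun μ _ => by
      rw [show lowT g h x α μ = ∑ k, g x α k * h x k μ from rfl]
  have chrX : ∀ μ ν : Fin n, ∑ ρ, chr g ginv x ρ μ ν * lowV g X x ρ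
      = ∑ k, X x k * ((1/2) * (pd μ (fun y => g y k ν) x + pd ν (fun y => g y k μ) x
          - pd k (fun y => g y μ ν) x)) := by
    intro μ ν
    have step1 : ∑ ρ, chr g ginv x ρ μ ν * lowV g X x ρ
        = ∑ ρ, ∑ k, ∑ τ, ((1/2) * (pd μ (fun y => g y k ν) x + pd ν (fun y => g y k μ) x
            - pd k (fun y => g y μ ν) x) * X x τ) * (g x τ ρ * ginv x ρ k) := by
      refine Finset.sum_congr rfl fun ρ _ => ?_
      rw [show chr g ginv x ρ μ ν = (1/2) * ∑ k, ginv x ρ k * (pd μ (fun y => g y k ν) x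
            + pd ν (fun y => g y k μ) x - pd k (fun y => g y μ ν) x) from rfl,
        show lowV g X x ρ = ∑ τ, g x ρ τ * X x τ from rfl,
        show ((1:ℝ)/2 * ∑ k, ginv x ρ k * (pd μ (fun y => g y k ν) x + pd ν (fun y => g y k μ) x - pd k (fun y => g y μ ν) x))
          = ∑ k, (1:ℝ)/2 * (ginv x ρ k * (pd μ (fun y => g y k ν) x + pd ν (fun y => g y k μ) x - pd k (fun y => g y μ ν) x)) from Finset.mul_sum _ _ _,
        Finset.sum_mul_sum]
      refine Finset.sum_congr rfl fun k _ => Finset.sum_congr rfl fun τ _ => ?_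
      rw [hgsym x ρ τ]
      ring
    rw [step1, sum_swap3' (fun ρ k τ => ((1/2) * (pd μ (fun y => g y k ν) x
        + pd ν (fun y => g y k μ) x - pd k (fun y => g y μ ν) x) * X x τ) * (g x τ ρ * ginv x ρ k))]
    refine Finset.sum_congr rfl fun k _ => ?_
    calc ∑ τ : Fin n, ∑ ρ : Fin n, ((1/2) * (pd μ (fun y => g y k ν) x + pd ν (fun y => g y k μ) x
            - pd k (fun y => g y μ ν) x) * X x τ) * (g x τ ρ * ginv x ρ k)
        = ∑ τ : Fin n, ((1/2) * (pd μ (fun y => g y k ν) x + pd ν (fun y => g y k μ) x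
            - pd k (fun y => g y μ ν) x) * X x τ) * (if τ = k then 1 else 0) := by
          refine Finset.sum_congr rfl fun τ _ => ?_
          rw [← Finset.mul_sum, hinv x τ k]
      _ = X x k * ((1/2) * (pd μ (fun y => g y k ν) x + pd ν (fun y => g y k μ) x
            - pd k (fun y => g y μ ν) x)) := by
          simp only [mul_ite, mul_one, mul_zero]
          rw [Finset.sum_ite_eq' Finset.univ k]
          simp only [Finset.mem_univ, if_true]
          ring
  have NL : ∀ μ ν : Fin n, nablaLow g ginv X x μ ν + nablaLow g ginv X x ν μ
      = ∑ k, (g x ν k * pd μ (fun y => X y k) x + g x μ k * pd ν (fun y => X y k) x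
          + X x k * pd k (fun y => g y μ ν) x) := by
    intro μ ν
    rw [show nablaLow g ginv X x μ ν
        = pd μ (fun y => lowV g X y ν) x - ∑ ρ, chr g ginv x ρ μ ν * lowV g X x ρ from rfl,
      show nablaLow g ginv X x ν μ
        = pd ν (fun y => lowV g X y μ) x - ∑ ρ, chr g ginv x ρ ν μ * lowV g X x ρ from rfl,
      pdlowV μ ν, pdlowV ν μ, chrX μ ν, chrX ν μ,
      ← Finset.sum_sub_distrib, ← Finset.sum_sub_distrib, ← Finset.sum_add_distrib]
    refine Finset.sum_congr rfl fun k _ => ?_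
    rw [gsymD μ ν k, gsymD ν μ k, gsymD k ν μ]
    ring
  have TR : ∑ μ, ∑ ν, h x μ α * h x ν β *
        (nablaLow g ginv X x μ ν + nablaLow g ginv X x ν μ)
      = ((Matrix.of fun i j => h x i j)ᵀ * ((Matrix.of fun i j => pd i (fun y => X y j) x) * (Matrix.of fun i j => g x i j) + (Matrix.of fun i j => g x i j) * (Matrix.of fun i j => pd i (fun y => X y j) x)ᵀ + (Matrix.of fun i j => ∑ σ, X x σ * pd σ (fun y => g y i j) x)) * (Matrix.of fun i j => h x i j)) α β := by
    simp only [Matrix.add_apply, Matrix.mul_apply, Matrix.transpose_apply, Matrix.of_apply]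
    rw [sum_swap' (fun μ ν => h x μ α * h x ν β *
        (nablaLow g ginv X x μ ν + nablaLow g ginv X x ν μ))]
    refine Finset.sum_congr rfl fun ν _ => ?_
    rw [Finset.sum_mul]
    refine Finset.sum_congr rfl fun μ _ => ?_
    rw [NL μ ν]
    have BC : (∑ k, (g x ν k * pd μ (fun y => X y k) x + g x μ k * pd ν (fun y => X y k) x
          + X x k * pd k (fun y => g y μ ν) x))
        = (∑ k, pd μ (fun y => X y k) x * g x k ν) + (∑ k, g x μ k * pd ν (fun y => X y k) x)
          + ∑ σ, X x σ * pd σ (fun y => g y μ ν) x := by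
      rw [Finset.sum_add_distrib, Finset.sum_add_distrib]
      congr 1
      congr 1
      exact Finset.sum_congr rfl fun k _ => by rw [hgsym x ν k]; ring
    rw [BC]
    ring
  calc (∑ μ, X x μ * pd μ (fun y => lowT g h y α β) x)
        + (∑ μ, lowT g h x μ β * pd α (fun y => X y μ) x)
        + (∑ μ, lowT g h x α μ * pd β (fun y => X y μ) x)
      = ((Matrix.of fun i j => ∑ σ, X x σ * pd σ (fun y => g y i j) x) * (Matrix.of fun i j => h x i j) + (Matrix.of fun i j => g x i j) * (Matrix.of fun i j => ∑ σ, X x σ * pd σ (fun y => h y i j) x)) α β + ((Matrix.of fun i j => pd i (fun y => X y j) x) * ((Matrix.of fun i j => g x i j) * (Matrix.of fun i j => h x i j))) α β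
          + (((Matrix.of fun i j => g x i j) * (Matrix.of fun i j => h x i j)) * (Matrix.of fun i j => pd i (fun y => X y j) x)ᵀ) α β := by rw [T1, T2, T3]
    _ = ((Matrix.of fun i j => ∑ σ, X x σ * pd σ (fun y => g y i j) x) * (Matrix.of fun i j => h x i j) + (Matrix.of fun i j => g x i j) * (Matrix.of fun i j => ∑ σ, X x σ * pd σ (fun y => h y i j) x) + (Matrix.of fun i j => pd i (fun y => X y j) x) * ((Matrix.of fun i j => g x i j) * (Matrix.of fun i j => h x i j))
          + ((Matrix.of fun i j => g x i j) * (Matrix.of fun i j => h x i j)) * (Matrix.of fun i j => pd i (fun y => X y j) x)ᵀ) α β := by simp [Matrix.add_apply]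
    _ = ((Matrix.of fun i j => h x i j)ᵀ * ((Matrix.of fun i j => pd i (fun y => X y j) x) * (Matrix.of fun i j => g x i j) + (Matrix.of fun i j => g x i j) * (Matrix.of fun i j => pd i (fun y => X y j) x)ᵀ + (Matrix.of fun i j => ∑ σ, X x σ * pd σ (fun y => g y i j) x)) * (Matrix.of fun i j => h x i j)) α β := by rw [main]
    _ = ∑ μ, ∑ ν, h x μ α * h x ν β *
          (nablaLow g ginv X x μ ν + nablaLow g ginv X x ν μ) := TR.symm
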